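/- arXiv:1801.09966 — 2 statements merged into one kernel-verified Lean document; each statement's English description precedes it below -/
import Mathlib

section
/- Cutoff property (3): For every ε, b > 0 there is a constant c = c(ε,b) > 0 such that for all x in the support of χ'(·;ε,b) (i.e. for ε < x < b+ε), [χ''(x;ε,b)]² / χ'(x;ε,b) ≤ c · χ'(x;ε/3,b+ε). -/
open MeasureTheory Real Filter
open scoped ENNReal NNReal

noncomputable section

/-- The profile `ρ(x) = a ∫₀ˣ yᵖ(1-y)ᵖ dy`, normalized so that `ρ(1) = 1`. -/
def rho (p : ℕ) (x : ℝ) : ℝ :=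
  (∫ y in (0:ℝ)..1, y^p * (1-y)^p)⁻¹ * ∫ y in (0:ℝ)..x, y^p * (1-y)^p

/-- The cutoff `χ(x; ε, b)`. -/
def chi (p : ℕ) (ε b x : ℝ) : ℝ :=
  if x ≤ ε then 0 else if x < b + ε then rho p ((x - ε)/b) else 1

/-- The weighted cutoff `χₙ(x; ε, b) = xⁿ χ(x; ε, b)`. -/
def chiN (p n : ℕ) (ε b x : ℝ) : ℝ := x^n * chi p ε b x

/-- `η(x; ε, b) = sqrt(χ'(x; ε, b))`. -/
def eta (p : ℕ) (ε b x : ℝ) : ℝ := Real.sqrt (deriv (fun y => chi p ε b y) x)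

/-- `ηₙ(x; ε, b) = sqrt(χₙ'(x; ε, b))`. -/
def etaN (p n : ℕ) (ε b x : ℝ) : ℝ := Real.sqrt (deriv (fun y => chiN p n ε b y) x)

lemma gcont (p : ℕ) : Continuous (fun y : ℝ => y^p * (1-y)^p) :=
  (continuous_pow p).mul ((continuous_const.sub continuous_id).pow p)

lemma rho_hasDerivAt (p : ℕ) (z : ℝ) :
    HasDerivAt (rho p)
      ((∫ y in (0:ℝ)..1, y^p * (1-y)^p)⁻¹ * (z^p * (1-z)^p)) z := by
  have hc := gcont p
  have h := intervalIntegral.integral_hasDerivAt_right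
    (hc.intervalIntegrable 0 z)
    (hc.stronglyMeasurableAtFilter volume (nhds z))
    hc.continuousAt
  exact h.const_mul _

lemma chi_deriv_eq (p : ℕ) {ε b x : ℝ} (hb : 0 < b) (hx : x ∈ Set.Ioo ε (b+ε)) :
    deriv (fun y => chi p ε b y) x =
      (∫ y in (0:ℝ)..1, y^p * (1-y)^p)⁻¹
        * (((x-ε)/b)^p * (1-(x-ε)/b)^p) * (1/b) := by
  have heq : (fun y => chi p ε b y) =ᶠ[nhds x] fun t => rho p ((t-ε)/b) := by
    filter_upwards [Ioo_mem_nhds hx.1 hx.2] with t ht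
    simp only [chi, if_neg (not_le.mpr ht.1), if_pos ht.2]
  rw [heq.deriv_eq]
  have hinner : HasDerivAt (fun t : ℝ => (t-ε)/b) (1/b) x := by
    simpa using ((hasDerivAt_id x).sub_const ε).div_const b
  have h : HasDerivAt (fun t : ℝ => rho p ((t-ε)/b))
      ((∫ y in (0:ℝ)..1, y^p * (1-y)^p)⁻¹ * (((x-ε)/b)^p * (1-(x-ε)/b)^p) * (1/b)) x :=
    HasDerivAt.comp (h₂ := rho p) (h := fun t : ℝ => (t-ε)/b) x (rho_hasDerivAt p ((x-ε)/b)) hinner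
  exact h.deriv

lemma g_hasDerivAt (p : ℕ) (y : ℝ) :
    HasDerivAt (fun t : ℝ => t^p * (1-t)^p)
      ((p:ℝ) * y^(p-1) * (1-y)^p + y^p * ((p:ℝ) * (1-y)^(p-1) * (-1))) y := by
  have h1 : HasDerivAt (fun t : ℝ => t^p) ((p:ℝ)*y^(p-1)) y := hasDerivAt_pow p y
  have hi : HasDerivAt (fun t : ℝ => 1 - t) (-1) y := by
    simpa using (hasDerivAt_id y).const_sub 1
  have h2 : HasDerivAt (fun t : ℝ => (1-t)^p) ((p:ℝ)*(1-y)^(p-1)*(-1)) y :=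
    (hasDerivAt_pow p (1-y)).comp y hi
  exact h1.mul h2

lemma chi_deriv2_eq (p : ℕ) {ε b x : ℝ} (hb : 0 < b) (hx : x ∈ Set.Ioo ε (b+ε)) :
    deriv (deriv (fun y => chi p ε b y)) x =
      (∫ y in (0:ℝ)..1, y^p * (1-y)^p)⁻¹
        * (((p:ℝ) * ((x-ε)/b)^(p-1) * (1-(x-ε)/b)^p
            + ((x-ε)/b)^p * ((p:ℝ) * (1-(x-ε)/b)^(p-1) * (-1))) * (1/b)) * (1/b) := by
  have heq : deriv (fun y => chi p ε b y) =ᶠ[nhds x]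
      fun t => (∫ y in (0:ℝ)..1, y^p * (1-y)^p)⁻¹
        * (((t-ε)/b)^p * (1-(t-ε)/b)^p) * (1/b) := by
    filter_upwards [Ioo_mem_nhds hx.1 hx.2] with t ht
    exact chi_deriv_eq p hb ht
  rw [heq.deriv_eq]
  have hinner : HasDerivAt (fun t : ℝ => (t-ε)/b) (1/b) x := by
    simpa using ((hasDerivAt_id x).sub_const ε).div_const b
  have h : HasDerivAt (fun t : ℝ => ((t-ε)/b)^p * (1-(t-ε)/b)^p)
      (((p:ℝ) * ((x-ε)/b)^(p-1) * (1-(x-ε)/b)^p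
        + ((x-ε)/b)^p * ((p:ℝ) * (1-(x-ε)/b)^(p-1) * (-1))) * (1/b)) x :=
    HasDerivAt.comp (h₂ := fun t : ℝ => t^p * (1-t)^p) (h := fun t : ℝ => (t-ε)/b) x (g_hasDerivAt p ((x-ε)/b)) hinner
  have h2 := (h.const_mul ((∫ y in (0:ℝ)..1, y^p * (1-y)^p)⁻¹)).mul_const (1/b)
  exact h2.deriv

lemma final_arith {A d gy gz b e m c0 : ℝ} (hA : 0 < A) (hb : 0 < b) (he : 0 < e)
    (hgy : 0 < gy) (hm : 0 < m) (hc0 : 0 ≤ c0)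
    (hkey : d^2 ≤ c0 * gy) (hgz : m ≤ gz) :
    (A * (d * (1/b)) * (1/b))^2 / (A * gy * (1/b))
      ≤ c0 * (b + e) / (b^3 * m) * (A * (gz) * (1/(b+e))) := by
  have hbe : 0 < b + e := by linarith
  have h1 : (A * (d * (1/b)) * (1/b))^2 / (A * gy * (1/b)) = A * d^2 / (b^3 * gy) := by
    field_simp
  have h2 : A * d^2 / (b^3 * gy) ≤ A * c0 / b^3 := by
    rw [div_le_div_iff₀ (mul_pos (pow_pos hb 3) hgy) (pow_pos hb 3)]
    nlinarith [mul_le_mul_of_nonneg_left hkey hA.le, pow_pos hb 3]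
  have h3 : A * c0 / b^3 ≤ c0 * (b + e) / (b^3 * m) * (A * gz * (1/(b+e))) := by
    have heq2 : c0 * (b + e) / (b^3 * m) * (A * m * (1/(b+e))) = A * c0 / b^3 := by
      field_simp
    rw [← heq2]
    have hcnn : (0:ℝ) ≤ c0 * (b + e) / (b^3 * m) :=
      div_nonneg (mul_nonneg hc0 hbe.le) (mul_pos (pow_pos hb 3) hm).le
    refine mul_le_mul_of_nonneg_left ?_ hcnn
    refine mul_le_mul_of_nonneg_right ?_ (one_div_nonneg.mpr hbe.le)
    exact mul_le_mul_of_nonneg_left hgz hA.le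
  rw [h1]
  exact le_trans h2 h3

/-- **Cutoff property (3):** on the support of `χ'(·;ε,b)`,
`[χ'']²/χ' ≤ c·χ'(·;ε/3,b+ε)`. -/
theorem cutoff_property_three :
    ∃ p₀ : ℕ, ∀ p ≥ p₀, ∀ ε > (0:ℝ), ∀ b > (0:ℝ), ∃ c > (0:ℝ),
      ∀ x ∈ Set.Ioo ε (b + ε),
        (deriv (deriv (fun y => chi p ε b y)) x)^2 / deriv (fun y => chi p ε b y) x
          ≤ c * deriv (fun y => chi p (ε/3) (b + ε) y) x := by
  refine ⟨2, fun p hp ε hε b hb => ?_⟩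
  obtain ⟨q, rfl⟩ : ∃ q, p = q + 2 := ⟨p - 2, by omega⟩
  have hbε : (0:ℝ) < b + ε := by linarith
  have hIpos : 0 < (∫ y in (0:ℝ)..1, y^(q+2) * (1-y)^(q+2)) := by
    apply intervalIntegral.intervalIntegral_pos_of_pos_on
      ((gcont (q+2)).intervalIntegrable 0 1)
      (fun y hy => mul_pos (pow_pos hy.1 _)
        (pow_pos (by linarith [hy.2] : (0:ℝ) < 1 - y) _))
      one_pos
  have hA : 0 < (∫ y in (0:ℝ)..1, y^(q+2) * (1-y)^(q+2))⁻¹ := inv_pos.mpr hIpos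
  have hm : 0 < (2*ε/3/(b+ε))^(q+2) * (ε/3/(b+ε))^(q+2) :=
    mul_pos (pow_pos (div_pos (by linarith) hbε) _) (pow_pos (div_pos (by linarith) hbε) _)
  refine ⟨((q:ℝ)+2)^2 * (b+ε) / (b^3 * ((2*ε/3/(b+ε))^(q+2) * (ε/3/(b+ε))^(q+2))),
    div_pos (mul_pos (by positivity) hbε) (mul_pos (pow_pos hb 3) hm), fun x hx => ?_⟩
  have hx' : x ∈ Set.Ioo (ε/3) (b + ε + ε/3) :=
    ⟨by linarith [hx.1], by linarith [hx.2]⟩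
  rw [chi_deriv_eq (q+2) hb hx, chi_deriv2_eq (q+2) hb hx, chi_deriv_eq (q+2) hbε hx']
  set Y := (x - ε)/b with hYdef
  set Z := (x - ε/3)/(b+ε) with hZdef
  have hY0 : 0 < Y := div_pos (by linarith [hx.1]) hb
  have hY1 : Y < 1 := (div_lt_one hb).mpr (by linarith [hx.2])
  have hgy : 0 < Y^(q+2) * (1-Y)^(q+2) :=
    mul_pos (pow_pos hY0 _) (pow_pos (by linarith) _)
  -- key pointwise inequality
  have e1 : Y^q ≤ 1 := pow_le_one₀ hY0.le hY1.le
  have e5 : (0:ℝ) ≤ (1-Y)^q := pow_nonneg (by linarith) q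
  have e2 : (1-Y)^q ≤ 1 := pow_le_one₀ (by linarith) (by linarith)
  have e3 : (1-2*Y)^2 ≤ 1 := by nlinarith
  have prod1 : Y^q * (1-Y)^q * (1-2*Y)^2 ≤ 1 := by
    have h1' : Y^q * (1-Y)^q ≤ 1 := mul_le_one₀ e1 e5 e2
    calc Y^q * (1-Y)^q * (1-2*Y)^2 ≤ 1 * 1 := mul_le_mul h1' e3 (sq_nonneg _) zero_le_one
      _ = 1 := one_mul 1
  have hkey : ((↑(q+2):ℝ) * Y^(q+2-1) * (1-Y)^(q+2)
        + Y^(q+2) * ((↑(q+2):ℝ) * (1-Y)^(q+2-1) * (-1)))^2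
      ≤ ((q:ℝ)+2)^2 * (Y^(q+2) * (1-Y)^(q+2)) := by
    have hq1 : q + 2 - 1 = q + 1 := rfl
    rw [hq1]
    have expand : ((↑(q+2):ℝ) * Y^(q+1) * (1-Y)^(q+2)
          + Y^(q+2) * ((↑(q+2):ℝ) * (1-Y)^(q+1) * (-1)))^2
        = ((q:ℝ)+2)^2 * (Y^(q+2) * (1-Y)^(q+2)) * (Y^q * (1-Y)^q * (1-2*Y)^2) := by
      push_cast
      ring
    rw [expand]
    calc ((q:ℝ)+2)^2 * (Y^(q+2) * (1-Y)^(q+2)) * (Y^q * (1-Y)^q * (1-2*Y)^2)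
        ≤ ((q:ℝ)+2)^2 * (Y^(q+2) * (1-Y)^(q+2)) * 1 :=
          mul_le_mul_of_nonneg_left prod1 (by positivity)
      _ = ((q:ℝ)+2)^2 * (Y^(q+2) * (1-Y)^(q+2)) := mul_one _
  -- lower bound for the right-hand cutoff
  have hZl : 2*ε/3/(b+ε) ≤ Z := by
    rw [hZdef, div_le_div_iff₀ hbε hbε]
    nlinarith [hx.1]
  have hZu : ε/3/(b+ε) ≤ 1 - Z := by
    have h1z : 1 - Z = (b + ε - (x - ε/3))/(b+ε) := by
      rw [hZdef]
      field_simp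
    rw [h1z, div_le_div_iff₀ hbε hbε]
    nlinarith [hx.2]
  have hz0 : (0:ℝ) ≤ 2*ε/3/(b+ε) := (div_pos (by linarith) hbε).le
  have hz0' : (0:ℝ) ≤ ε/3/(b+ε) := (div_pos (by linarith) hbε).le
  have hgz : (2*ε/3/(b+ε))^(q+2) * (ε/3/(b+ε))^(q+2) ≤ Z^(q+2) * (1-Z)^(q+2) :=
    mul_le_mul (pow_le_pow_left₀ hz0 hZl _) (pow_le_pow_left₀ hz0' hZu _)
      (pow_nonneg hz0' _) (pow_nonneg (le_trans hz0 hZl) _)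
  exact final_arith hA hb hε hgy hm (by positivity) hkey hgz
end
end

section
/- Cutoff property (4): For every ε, b > 0 and each j = 1, 2, …, p there is a constant c = c(j,ε,b) > 0 such that for all x ∈ [ε, b+ε], |χ^{(j)}(x;ε,b)| ≤ c · χ'(x;ε/3,b+ε). -/
/-! On `[ε, b + ε]` everything is governed by the polynomial piece. Since
`ρ' = a yᵖ(1-y)ᵖ` vanishes to order `p` at `0` and `1`, the first `p` derivatives of the
piecewise function `χ(·; ε, b)` are obtained by gluing those of its pieces, so on the closed
interval `χ^{(j)}` is the `j`-th derivative of the smooth function `x ↦ ρ((x - ε)/b)`, hence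
continuous and bounded. The interval `[ε, b + ε]` lies strictly inside the transition region
`(ε/3, b + 4ε/3)` of `χ(·; ε/3, b + ε)`, where its derivative `ρ'((x - ε/3)/(b + ε))/(b + ε)`
is continuous and positive, hence bounded below by a positive constant by compactness. -/

open MeasureTheory Real Filter
open scoped ENNReal NNReal

noncomputable section

open Set Polynomial
open scoped ContDiff

theorem Polynomial.eval_iterate_derivative_eq_zero_of_pow_dvd {R : Type*} [CommRing R]
    {P : R[X]} {t : R} {m n : ℕ} (h : (X - C t) ^ n ∣ P) (hm : m < n) :
    (derivative^[m] P).eval t = 0 :=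
  dvd_iff_isRoot.mp <| (dvd_pow_self _ (Nat.sub_ne_zero_of_lt hm)).trans
    (pow_sub_dvd_iterate_derivative_of_pow_dvd m h)

theorem Polynomial.iteratedDeriv_eval {𝕜 : Type*} [NontriviallyNormedField 𝕜] (P : 𝕜[X])
    (k : ℕ) : iteratedDeriv k (fun x => P.eval x) = fun x => (derivative^[k] P).eval x := by
  induction k generalizing P with
  | zero => rfl
  | succ k ih =>
    rw [iteratedDeriv_succ', _root_.funext fun x => P.deriv (x := x), ih,
      Function.iterate_succ_apply]

section Calculus

variable {𝕜 E : Type*} [NontriviallyNormedField 𝕜] [NormedAddCommGroup E] [NormedSpace 𝕜 E]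

theorem iteratedDeriv_comp_sub_div {f : 𝕜 → E} {n : ℕ} (hf : ContDiff 𝕜 n f) (s c : 𝕜) :
    iteratedDeriv n (fun x => f ((x - s) / c)) =
      fun x => c⁻¹ ^ n • iteratedDeriv n f ((x - s) / c) := by
  simpa only [iteratedDeriv_comp_const_smul hf, div_eq_inv_mul] using
    iteratedDeriv_comp_sub_const n (fun x => f (c⁻¹ * x)) s

def HasDerivChain (n : ℕ) (f : ℕ → 𝕜 → E) : Prop :=
  ∀ k < n, ∀ x, HasDerivAt (f k) (f (k + 1) x) x

theorem HasDerivChain.iteratedDeriv_eq {n : ℕ} {f : ℕ → 𝕜 → E} (h : HasDerivChain n f)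
    {k : ℕ} (hk : k ≤ n) : iteratedDeriv k (f 0) = f k := by
  induction k with
  | zero => exact iteratedDeriv_zero
  | succ k ih =>
    rw [iteratedDeriv_succ, ih (by omega)]
    exact funext fun x => (h k hk x).deriv

theorem ContDiff.hasDerivChain {n : ℕ} {f : 𝕜 → E} (hf : ContDiff 𝕜 n f) :
    HasDerivChain n fun k => iteratedDeriv k f := fun k hk x => by
  simp only [iteratedDeriv_succ]
  exact (hf.differentiable_iteratedDeriv k (by exact_mod_cast hk) x).hasDerivAt

end Calculus

section Gluing

variable {E : Type*} [NormedAddCommGroup E] [NormedSpace ℝ E]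

theorem HasDerivAt.ite_le {f g f' g' : ℝ → E} {u x : ℝ} (hf : HasDerivAt f (f' x) x)
    (hg : HasDerivAt g (g' x) x) (h₀ : f u = g u) (h₁ : f' u = g' u) :
    HasDerivAt (fun y => if y ≤ u then f y else g y) (if x ≤ u then f' x else g' x) x := by
  rcases lt_trichotomy x u with hxu | rfl | hux
  · rw [if_pos hxu.le]
    exact hf.congr_of_eventuallyEq <| eventually_of_mem (Iio_mem_nhds hxu) fun y hy =>
      if_pos (le_of_lt hy)
  · rw [if_pos le_rfl]
    have hleft : HasDerivWithinAt (fun y => if y ≤ x then f y else g y) (f' x) (Iic x) x :=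
      hf.hasDerivWithinAt.congr (fun y hy => if_pos hy) (if_pos le_rfl)
    have hright : HasDerivWithinAt (fun y => if y ≤ x then f y else g y) (f' x) (Ioi x) x := by
      rw [h₁]
      exact hg.hasDerivWithinAt.congr (fun y hy => if_neg (not_le.2 hy)) (by simp [h₀])
    simpa using hleft.union hright.Ici_of_Ioi
  · rw [if_neg (not_le.2 hux)]
    exact hg.congr_of_eventuallyEq <| eventually_of_mem (Ioi_mem_nhds hux) fun y hy =>
      if_neg (not_le.2 hy)

theorem HasDerivChain.ite_le {n : ℕ} {f g : ℕ → ℝ → E} {u : ℝ} (hf : HasDerivChain n f)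
    (hg : HasDerivChain n g) (hfg : ∀ k ≤ n, f k u = g k u) :
    HasDerivChain n fun k y => if y ≤ u then f k y else g k y := fun k hk x =>
  (hf k hk x).ite_le (hg k hk x) (hfg k hk.le) (hfg (k + 1) hk)

theorem iteratedDeriv_ite_eqOn_Icc {F : ℝ → E} {a c : E} {u v : ℝ} {n j : ℕ} (huv : u ≤ v)
    (hF : ContDiff ℝ n F) (hu : ∀ k ≤ n, iteratedDeriv k F u = iteratedDeriv k (fun _ => a) u)
    (hv : ∀ k ≤ n, iteratedDeriv k F v = iteratedDeriv k (fun _ => c) v) (hj : j ≤ n) :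
    EqOn (iteratedDeriv j fun x => if x ≤ u then a else if x < v then F x else c)
      (iteratedDeriv j F) (Icc u v) := by
  set inner := fun k y =>
    if y ≤ v then iteratedDeriv k F y else iteratedDeriv k (fun _ => c) y
  set outer := fun k y => if y ≤ u then iteratedDeriv k (fun _ => a) y else inner k y
  have hinner : HasDerivChain n inner := hF.hasDerivChain.ite_le contDiff_const.hasDerivChain hv
  have houter : HasDerivChain n outer :=
    contDiff_const.hasDerivChain.ite_le hinner fun k hk => by simp [inner, huv, hu k hk]
  have hFv : F v = c := by simpa using hv 0 n.zero_le
  have hglued : (fun x => if x ≤ u then a else if x < v then F x else c) = outer 0 := by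
    funext x
    rcases lt_trichotomy x v with hxv | rfl | hvx
    · simp [outer, inner, hxv, hxv.le]
    · simp [outer, inner, hFv]
    · simp [outer, inner, not_lt.2 hvx.le, not_le.2 hvx]
  intro x hx
  rw [hglued, houter.iteratedDeriv_eq hj]
  rcases hx.1.eq_or_lt with rfl | hux
  · simp [outer, hu j hj]
  · simp [outer, inner, not_le.2 hux, hx.2]

end Gluing

theorem IsCompact.exists_norm_le_mul_of_pos {X E : Type*} [TopologicalSpace X]
    [SeminormedAddCommGroup E] {K : Set X} (hK : IsCompact K) {f : X → E} {g : X → ℝ}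
    (hf : ContinuousOn f K) (hg : ContinuousOn g K) (hpos : ∀ x ∈ K, 0 < g x) :
    ∃ c > 0, ∀ x ∈ K, ‖f x‖ ≤ c * g x := by
  obtain ⟨C, hC⟩ := hK.exists_bound_of_continuousOn hf
  obtain ⟨m, hm, hmg⟩ := hK.exists_forall_le' hg hpos
  refine ⟨max C 1 / m, by positivity, fun x hx => ?_⟩
  calc ‖f x‖ ≤ max C 1 := (hC x hx).trans (le_max_left _ _)
    _ = max C 1 / m * m := by field_simp
    _ ≤ max C 1 / m * g x := by gcongr; exact hmg x hx

def rhoDensity (p : ℕ) : ℝ[X] := X ^ p * (1 - X) ^ p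

theorem eval_rhoDensity (p : ℕ) (y : ℝ) : (rhoDensity p).eval y = y ^ p * (1 - y) ^ p := by
  simp [rhoDensity]

theorem integral_rhoDensity_pos (p : ℕ) : 0 < ∫ y in (0:ℝ)..1, y ^ p * (1 - y) ^ p := by
  refine intervalIntegral.intervalIntegral_pos_of_pos_on
    ((by fun_prop : Continuous _).intervalIntegrable _ _) (fun y hy => ?_) zero_lt_one
  have : 0 < 1 - y := by linarith [hy.2]
  have := hy.1
  positivity

theorem hasDerivAt_rho (p : ℕ) (t : ℝ) :
    HasDerivAt (rho p)
      ((∫ y in (0:ℝ)..1, y ^ p * (1 - y) ^ p)⁻¹ * (rhoDensity p).eval t) t := by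
  have hcont : Continuous fun y : ℝ => y ^ p * (1 - y) ^ p := by fun_prop
  rw [eval_rhoDensity]
  exact (intervalIntegral.integral_hasDerivAt_right (hcont.intervalIntegrable _ _)
    (hcont.stronglyMeasurableAtFilter _ _) hcont.continuousAt).const_mul _

theorem deriv_rho (p : ℕ) :
    deriv (rho p) =
      fun t => (∫ y in (0:ℝ)..1, y ^ p * (1 - y) ^ p)⁻¹ * (rhoDensity p).eval t :=
  funext fun t => (hasDerivAt_rho p t).deriv

theorem contDiff_rho (p : ℕ) : ContDiff ℝ ∞ (rho p) :=
  contDiff_infty_iff_deriv.2 ⟨fun t => (hasDerivAt_rho p t).differentiableAt, by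
    simp only [deriv_rho, eval_rhoDensity]
    fun_prop⟩

theorem iteratedDeriv_succ_rho (p k : ℕ) (t : ℝ) :
    iteratedDeriv (k + 1) (rho p) t =
      (∫ y in (0:ℝ)..1, y ^ p * (1 - y) ^ p)⁻¹ * (derivative^[k] (rhoDensity p)).eval t := by
  rw [iteratedDeriv_succ', deriv_rho, iteratedDeriv_const_mul_field, iteratedDeriv_eval]

theorem iteratedDeriv_rho_zero {p k : ℕ} (hk : k ≤ p) : iteratedDeriv k (rho p) 0 = 0 := by
  rcases k with _ | k
  · simp [rho]
  · rw [iteratedDeriv_succ_rho, eval_iterate_derivative_eq_zero_of_pow_dvd _ hk, mul_zero]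
    simp [rhoDensity]

theorem iteratedDeriv_rho_one {p k : ℕ} (hk : k ≤ p) :
    iteratedDeriv k (rho p) 1 = if k = 0 then 1 else 0 := by
  rcases k with _ | k
  · simpa [rho] using inv_mul_cancel₀ (integral_rhoDensity_pos p).ne'
  · rw [iteratedDeriv_succ_rho, eval_iterate_derivative_eq_zero_of_pow_dvd _ hk, mul_zero,
      if_neg k.succ_ne_zero]
    have h : X - C 1 ∣ (1 - X : ℝ[X]) := ⟨-1, by rw [C_1]; ring⟩
    exact (pow_dvd_pow_of_dvd h p).trans (dvd_mul_left _ _)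

theorem deriv_rho_pos {p : ℕ} {t : ℝ} (ht : t ∈ Ioo 0 1) : 0 < deriv (rho p) t := by
  have h₀ := ht.1
  have h₁ : 0 < 1 - t := by linarith [ht.2]
  have := integral_rhoDensity_pos p
  simp only [deriv_rho, eval_rhoDensity]
  positivity

theorem contDiff_rho_comp_sub_div (p : ℕ) (ε b : ℝ) :
    ContDiff ℝ ∞ fun x => rho p ((x - ε) / b) :=
  (contDiff_rho p).comp (by fun_prop)

theorem iteratedDeriv_rho_comp_sub_div (p k : ℕ) (ε b : ℝ) :
    iteratedDeriv k (fun x => rho p ((x - ε) / b)) =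
      fun x => b⁻¹ ^ k * iteratedDeriv k (rho p) ((x - ε) / b) :=
  iteratedDeriv_comp_sub_div (contDiff_infty.1 (contDiff_rho p) k) ε b

theorem iteratedDeriv_chi_eqOn {p j : ℕ} {ε b : ℝ} (hb : 0 < b) (hj : j ≤ p) :
    EqOn (iteratedDeriv j (chi p ε b)) (iteratedDeriv j fun x => rho p ((x - ε) / b))
      (Icc ε (b + ε)) := by
  refine iteratedDeriv_ite_eqOn_Icc (by linarith) (contDiff_infty.1
    (contDiff_rho_comp_sub_div p ε b) p) (fun k hk => ?_) (fun k hk => ?_) hj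
  · simp [iteratedDeriv_rho_comp_sub_div, iteratedDeriv_rho_zero hk]
  · simp only [iteratedDeriv_rho_comp_sub_div, add_sub_cancel_right, div_self hb.ne',
      iteratedDeriv_rho_one hk, iteratedDeriv_const]
    split_ifs with hk0 <;> simp [hk0]

theorem deriv_chi_eqOn {p : ℕ} {ε b : ℝ} (hb : 0 < b) (hp : 1 ≤ p) :
    EqOn (deriv (chi p ε b)) (deriv fun x => rho p ((x - ε) / b)) (Icc ε (b + ε)) := by
  simpa only [iteratedDeriv_one] using iteratedDeriv_chi_eqOn hb hp

theorem deriv_rho_comp_sub_div_pos {p : ℕ} {ε b x : ℝ} (hb : 0 < b)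
    (hx : x ∈ Ioo ε (b + ε)) : 0 < deriv (fun x => rho p ((x - ε) / b)) x := by
  have ht : (x - ε) / b ∈ Ioo 0 1 :=
    ⟨div_pos (by linarith [hx.1]) hb, (div_lt_one hb).2 (by linarith [hx.2])⟩
  have h := iteratedDeriv_rho_comp_sub_div p 1 ε b
  simp only [iteratedDeriv_one, pow_one] at h
  rw [h]
  exact mul_pos (inv_pos.2 hb) (deriv_rho_pos ht)

/-- **Cutoff property (4):** on `[ε, b+ε]`, `|χ^{(j)}(·;ε,b)| ≤ c·χ'(·;ε/3,b+ε)` for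
`j = 1, …, p`. -/
theorem cutoff_property_four :
    ∃ p₀ : ℕ, ∀ p ≥ p₀, ∀ ε > (0:ℝ), ∀ b > (0:ℝ), ∀ j : ℕ, 1 ≤ j → j ≤ p →
      ∃ c > (0:ℝ), ∀ x ∈ Set.Icc ε (b + ε),
        |iteratedDeriv j (fun y => chi p ε b y) x|
          ≤ c * deriv (fun y => chi p (ε/3) (b + ε) y) x := by
  refine ⟨1, fun p hp ε hε b hb j _ hjp => ?_⟩
  have hbε : 0 < b + ε := by linarith
  have hK : Icc ε (b + ε) ⊆ Ioo (ε / 3) (b + ε + ε / 3) :=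
    Icc_subset_Ioo (by linarith) (by linarith)
  obtain ⟨c, hc, hbound⟩ := isCompact_Icc.exists_norm_le_mul_of_pos
    ((contDiff_infty.1 (contDiff_rho_comp_sub_div p ε b) j).continuous_iteratedDeriv'
      j).continuousOn
    ((contDiff_infty.1 (contDiff_rho_comp_sub_div p (ε / 3) (b + ε)) 1).continuous_deriv
      le_rfl).continuousOn
    fun x hx => deriv_rho_comp_sub_div_pos hbε (hK hx)
  refine ⟨c, hc, fun x hx => ?_⟩
  rw [iteratedDeriv_chi_eqOn hb hjp hx, deriv_chi_eqOn hbε hp (Ioo_subset_Icc_self (hK hx))]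
  exact hbound x hx
end
end
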